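/- arXiv:2504.00835 — 3 statements merged into one kernel-verified Lean document; each statement's English description precedes it below -/
import Mathlib

section
/- The periodic two-site Motzkin Hamiltonian H = Π + PΠP (a 9×9 matrix) annihilates all five vectors v₂ = |uu⟩, v₁ = |uf⟩+|fu⟩, v₀ = |ud⟩+|ff⟩+|du⟩, v₋₁ = |fd⟩+|df⟩, v₋₂ = |dd⟩: H·v_k = 0 for k = -2,...,2. -/
open Matrix
open scoped Kronecker

noncomputable section

/-- Spin-1 raising operator. -/
def sp : Matrix (Fin 3) (Fin 3) ℂ := !![0,1,0; 0,0,1; 0,0,0]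
/-- Spin-1 lowering operator. -/
def sm : Matrix (Fin 3) (Fin 3) ℂ := !![0,0,0; 1,0,0; 0,1,0]
/-- Spin-1 z-component. -/
def sz : Matrix (Fin 3) (Fin 3) ℂ := !![1,0,0; 0,0,0; 0,0,-1]

/-- Standard basis vectors of ℂ³. -/
def u : Fin 3 → ℂ := ![1,0,0]
def f : Fin 3 → ℂ := ![0,1,0]
def d : Fin 3 → ℂ := ![0,0,1]

/-- Tensor product of two vectors of ℂ³. -/
def tp (a b : Fin 3 → ℂ) : Fin 3 × Fin 3 → ℂ := fun p => a p.1 * b p.2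

/-- Rank-one projector U. -/
def U : Matrix (Fin 3 × Fin 3) (Fin 3 × Fin 3) ℂ :=
  (1/2 : ℂ) • vecMulVec (tp u f - tp f u) (tp u f - tp f u)
/-- Rank-one projector D. -/
def D : Matrix (Fin 3 × Fin 3) (Fin 3 × Fin 3) ℂ :=
  (1/2 : ℂ) • vecMulVec (tp d f - tp f d) (tp d f - tp f d)
/-- Rank-one projector F. -/
def F : Matrix (Fin 3 × Fin 3) (Fin 3 × Fin 3) ℂ :=
  (1/2 : ℂ) • vecMulVec (tp u d - tp f f) (tp u d - tp f f)

/-- The Motzkin projector Π = U + D + F. -/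
def Proj : Matrix (Fin 3 × Fin 3) (Fin 3 × Fin 3) ℂ := U + D + F

/-- The swap (permutation) operator on ℂ³ ⊗ ℂ³. -/
def P : Matrix (Fin 3 × Fin 3) (Fin 3 × Fin 3) ℂ :=
  fun p q => if p.1 = q.2 ∧ p.2 = q.1 then 1 else 0

/-! Each `v_k` is invariant under the swap `P` and orthogonal to the three vectors whose
rank-one projectors make up `Π`, so `Π v_k = 0` and `PΠP v_k = PΠ v_k = 0`. -/

theorem Matrix.add_mul_mul_mulVec_eq_zero {n α : Type*} [Fintype n] [NonUnitalSemiring α]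
    {A S : Matrix n n α} {v : n → α} (hS : S *ᵥ v = v) (hA : A *ᵥ v = 0) :
    (A + S * A * S) *ᵥ v = 0 := by
  rw [add_mulVec, ← mulVec_mulVec, ← mulVec_mulVec, hS, hA, mulVec_zero, add_zero]

theorem P_mulVec (v : Fin 3 × Fin 3 → ℂ) : P *ᵥ v = v ∘ Prod.swap := by
  ext p
  have hP : ∀ q, P p q = if q = p.swap then 1 else 0 := fun q => by
    simp only [P, Prod.ext_iff, Prod.fst_swap, Prod.snd_swap, eq_comm, and_comm]
  simp [mulVec, dotProduct, hP]

theorem tp_comp_swap (a b : Fin 3 → ℂ) : tp a b ∘ Prod.swap = tp b a :=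
  funext fun _ => mul_comm _ _

theorem Proj_mulVec_eq_zero {v : Fin 3 × Fin 3 → ℂ}
    (hU : (tp u f - tp f u) ⬝ᵥ v = 0) (hD : (tp d f - tp f d) ⬝ᵥ v = 0)
    (hF : (tp u d - tp f f) ⬝ᵥ v = 0) : Proj *ᵥ v = 0 := by
  simp [Proj, U, D, F, add_mulVec, smul_mulVec, vecMulVec_mulVec, hU, hD, hF]

theorem periodic_two_site_ground_states :
    (Proj + P * Proj * P).mulVec (tp u u) = 0 ∧
    (Proj + P * Proj * P).mulVec (tp u f + tp f u) = 0 ∧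
    (Proj + P * Proj * P).mulVec (tp u d + tp f f + tp d u) = 0 ∧
    (Proj + P * Proj * P).mulVec (tp f d + tp d f) = 0 ∧
    (Proj + P * Proj * P).mulVec (tp d d) = 0 := by
  refine ⟨?_, ?_, ?_, ?_, ?_⟩ <;>
  · refine add_mul_mul_mulVec_eq_zero ?_ (Proj_mulVec_eq_zero ?_ ?_ ?_)
    · simp only [P_mulVec, Pi.add_comp, tp_comp_swap, add_comm, add_left_comm]
    all_goals simp [dotProduct, Fintype.sum_prod_type, Fin.sum_univ_three, tp, u, f, d]
end
end

section
/- The operator Σ⁺ = s₁⁺ + s₂⁺ + (s₁⁺)² s₂⁻ + s₁⁻ (s₂⁺)² commutes with the periodic two-site Motzkin Hamiltonian H = Π + PΠP, and so does Σ⁻ = (Σ⁺)ᵀ. -/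
/-!
Each Motzkin move is annihilated by Σ⁺ from both sides: Σ⁺ sends |uf⟩ and |fu⟩ to |uu⟩,
|df⟩ and |fd⟩ to |ff⟩ + |ud⟩ + |du⟩, and |ud⟩ and |ff⟩ to |uf⟩ + |fu⟩; likewise for Σ⁻ = (Σ⁺)ᵀ.
Hence Σ⁺Π = ΠΣ⁺ = 0. Since Σ⁺ is invariant under the swap P it also commutes with PΠP, and
since H is symmetric, transposing gives the claim for Σ⁻.
-/

open Matrix
open scoped Kronecker

noncomputable section

/-- The raising operator Σ⁺ for the two-site chain. -/
def Sig : Matrix (Fin 3 × Fin 3) (Fin 3 × Fin 3) ℂ :=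
  sp ⊗ₖ (1 : Matrix (Fin 3) (Fin 3) ℂ) + (1 : Matrix (Fin 3) (Fin 3) ℂ) ⊗ₖ sp
    + (sp ^ 2) ⊗ₖ sm + sm ⊗ₖ (sp ^ 2)

theorem Commute.transpose {n α : Type*} [Fintype n] [CommSemiring α]
    {A B : Matrix n n α} (h : Commute A B) : Commute Aᵀ Bᵀ := by
  rw [Commute, SemiconjBy, ← transpose_mul, ← transpose_mul, h.eq]

lemma P_mul_apply (M : Matrix (Fin 3 × Fin 3) (Fin 3 × Fin 3) ℂ) (p q : Fin 3 × Fin 3) :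
    (P * M) p q = M p.swap q := by
  simp [P, mul_apply, Fintype.sum_prod_type, ite_and, Prod.swap]

lemma mul_P_apply (M : Matrix (Fin 3 × Fin 3) (Fin 3 × Fin 3) ℂ) (p q : Fin 3 × Fin 3) :
    (M * P) p q = M p q.swap := by
  simp [P, mul_apply, Fintype.sum_prod_type, ite_and, eq_comm, Prod.swap]

lemma transpose_P : Pᵀ = P := by
  ext p q
  simp [P, and_comm, eq_comm]

lemma P_mul_kronecker (A B : Matrix (Fin 3) (Fin 3) ℂ) : P * (A ⊗ₖ B) = (B ⊗ₖ A) * P := by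
  ext p q
  simp [P_mul_apply, mul_P_apply, mul_comm]

lemma commute_Sig_P : Commute Sig P := by
  simp only [Commute, SemiconjBy, Sig, add_mul, mul_add, P_mul_kronecker]
  abel

lemma transpose_Proj : Projᵀ = Proj := by
  simp only [Proj, U, D, F, transpose_add, transpose_smul, transpose_vecMulVec]

lemma mul_Proj_eq_zero {A : Matrix (Fin 3 × Fin 3) (Fin 3 × Fin 3) ℂ}
    (hU : A *ᵥ (tp u f - tp f u) = 0) (hD : A *ᵥ (tp d f - tp f d) = 0)
    (hF : A *ᵥ (tp u d - tp f f) = 0) : A * Proj = 0 := by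
  simp only [Proj, U, D, F, mul_add, Matrix.mul_smul, mul_vecMulVec, hU, hD, hF, zero_vecMulVec,
    smul_zero, add_zero]

lemma Proj_mul_eq_zero {A : Matrix (Fin 3 × Fin 3) (Fin 3 × Fin 3) ℂ}
    (hU : (tp u f - tp f u) ᵥ* A = 0) (hD : (tp d f - tp f d) ᵥ* A = 0)
    (hF : (tp u d - tp f f) ᵥ* A = 0) : Proj * A = 0 := by
  simp only [Proj, U, D, F, add_mul, Matrix.smul_mul, vecMulVec_mul, hU, hD, hF, vecMulVec_zero,
    smul_zero, add_zero]

lemma Sig_mul_Proj : Sig * Proj = 0 := by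
  apply mul_Proj_eq_zero <;>
  · ext ⟨i, j⟩
    fin_cases i <;> fin_cases j <;>
      simp [Sig, mulVec, dotProduct, Fintype.sum_prod_type, Fin.sum_univ_three, tp, u, f, d, sp, sm,
        one_apply, pow_two]

lemma Proj_mul_Sig : Proj * Sig = 0 := by
  apply Proj_mul_eq_zero <;>
  · ext ⟨i, j⟩
    fin_cases i <;> fin_cases j <;>
      simp [Sig, vecMul, dotProduct, Fintype.sum_prod_type, Fin.sum_univ_three, tp, u, f, d, sp, sm,
        one_apply, pow_two]

theorem Sigma_commutes_with_periodic_H :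
    Sig * (Proj + P * Proj * P) = (Proj + P * Proj * P) * Sig ∧
    Sig.transpose * (Proj + P * Proj * P) = (Proj + P * Proj * P) * Sig.transpose := by
  have hProj : Commute Sig Proj := Sig_mul_Proj.trans Proj_mul_Sig.symm
  have hH : Commute Sig (Proj + P * Proj * P) :=
    hProj.add_right ((commute_Sig_P.mul_right hProj).mul_right commute_Sig_P)
  have hH_symm : (Proj + P * Proj * P)ᵀ = Proj + P * Proj * P := by
    rw [transpose_add, transpose_mul, transpose_mul, transpose_P, transpose_Proj, mul_assoc]
  refine ⟨hH.eq, ?_⟩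
  simpa only [hH_symm] using hH.transpose.eq
end
end

section
/- Define Σᶻ = [Σ⁺,Σ⁻], Λ± = ±[Σᶻ, Σ^±], Λᶻ = [Λ⁺,Λ⁻] for the two-site chain. Then [Σᶻ, Λᶻ] = 0. -/
open Matrix
open scoped Kronecker

noncomputable section

/-- Σ⁻ = (Σ⁺)ᵀ. -/
def SigM : Matrix (Fin 3 × Fin 3) (Fin 3 × Fin 3) ℂ := Sig.transpose

/-- Σᶻ = [Σ⁺, Σ⁻]. -/
def SigZ : Matrix (Fin 3 × Fin 3) (Fin 3 × Fin 3) ℂ := Sig * SigM - SigM * Sig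

/-- Λ⁺ = [Σᶻ, Σ⁺]. -/
def LamP : Matrix (Fin 3 × Fin 3) (Fin 3 × Fin 3) ℂ := SigZ * Sig - Sig * SigZ

/-- Λ⁻ = -[Σᶻ, Σ⁻]. -/
def LamM : Matrix (Fin 3 × Fin 3) (Fin 3 × Fin 3) ℂ := -(SigZ * SigM - SigM * SigZ)

/-- Λᶻ = [Λ⁺, Λ⁻]. -/
def LamZ : Matrix (Fin 3 × Fin 3) (Fin 3 × Fin 3) ℂ := LamP * LamM - LamM * LamP

/-!
Σᶻ is block diagonal with eigenvalues `0, ±2, ±4`, and on the corresponding eigenspaces Λᶻ takes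
the values `0, ±8, ±88`. Interpolating, `2 Λᶻ = 3 (Σᶻ)³ - 4 Σᶻ`, so Λᶻ is a polynomial in Σᶻ and
commutes with it. The identity has integer coefficients, so it suffices to check it once over `ℤ`,
where it is a finite computation, and transport it along `ℤ → R`.
-/

namespace TwoSiteChain

def raise (R : Type*) [Zero R] [One R] : Matrix (Fin 3) (Fin 3) R := !![0,1,0; 0,0,1; 0,0,0]

def sigmaPlus (R : Type*) [Semiring R] : Matrix (Fin 3 × Fin 3) (Fin 3 × Fin 3) R :=
  raise R ⊗ₖ 1 + 1 ⊗ₖ raise R + (raise R ^ 2) ⊗ₖ (raise R)ᵀ + (raise R)ᵀ ⊗ₖ (raise R ^ 2)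

section Map

variable {R S : Type*} [Semiring R] [Semiring S] (φ : R →+* S)

lemma raise_map : (raise R).map φ = raise S := by
  ext i j
  fin_cases i <;> fin_cases j <;> simp [raise]

lemma map_kronecker {l m n p : Type*} (A : Matrix l m R) (B : Matrix n p R) :
    (A ⊗ₖ B).map φ = A.map φ ⊗ₖ B.map φ := by
  ext
  simp

lemma sigmaPlus_map : (sigmaPlus R).map φ = sigmaPlus S := by
  simp [sigmaPlus, Matrix.map_add, map_kronecker, Matrix.map_pow, raise_map, transpose_map]

end Map

section Tower

variable {n R S : Type*} [Fintype n] [Ring R] [Ring S]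

def sigmaZ (X : Matrix n n R) : Matrix n n R := X * Xᵀ - Xᵀ * X

def lambdaPlus (X : Matrix n n R) : Matrix n n R := sigmaZ X * X - X * sigmaZ X

def lambdaMinus (X : Matrix n n R) : Matrix n n R := -(sigmaZ X * Xᵀ - Xᵀ * sigmaZ X)

def lambdaZ (X : Matrix n n R) : Matrix n n R :=
  lambdaPlus X * lambdaMinus X - lambdaMinus X * lambdaPlus X

lemma sigmaZ_map (φ : R →+* S) (X : Matrix n n R) : sigmaZ (X.map φ) = (sigmaZ X).map φ := by
  simp [sigmaZ, Matrix.map_sub, Matrix.map_mul, transpose_map]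

lemma lambdaZ_map (φ : R →+* S) (X : Matrix n n R) : lambdaZ (X.map φ) = (lambdaZ X).map φ := by
  simp [lambdaZ, lambdaPlus, lambdaMinus, sigmaZ_map, Matrix.map_sub, Matrix.map_mul,
    transpose_map]

end Tower

lemma commute_of_nsmul_right {n R : Type*} [Fintype n] [Ring R] [IsAddTorsionFree R]
    {A B : Matrix n n R} {k : ℕ} (hk : k ≠ 0) (h : Commute A (k • B)) : Commute A B := by
  have hk' : k • (A * B) = k • (B * A) := by
    rw [← mul_smul_comm, ← smul_mul_assoc]
    exact h.eq
  ext i j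
  exact nsmul_right_injective hk (congrFun (congrFun hk' i) j)

lemma two_nsmul_lambdaZ_sigmaPlus_int :
    2 • lambdaZ (sigmaPlus ℤ) = 3 • sigmaZ (sigmaPlus ℤ) ^ 3 - 4 • sigmaZ (sigmaPlus ℤ) := by
  decide

lemma commute_sigmaZ_lambdaZ_sigmaPlus (R : Type*) [Ring R] :
    Commute (sigmaZ (sigmaPlus R)) (lambdaZ (sigmaPlus R)) := by
  have commute_int : Commute (sigmaZ (sigmaPlus ℤ)) (lambdaZ (sigmaPlus ℤ)) := by
    refine commute_of_nsmul_right two_ne_zero ?_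
    rw [two_nsmul_lambdaZ_sigmaPlus_int]
    exact ((Commute.self_pow _ 3).smul_right 3).sub_right ((Commute.refl _).smul_right 4)
  have := commute_int.map (Int.castRingHom R).mapMatrix
  simpa only [RingHom.mapMatrix_apply, ← sigmaZ_map, ← lambdaZ_map, sigmaPlus_map] using this

lemma sig_eq_sigmaPlus : Sig = sigmaPlus ℂ := by
  have hsp : sp = raise ℂ := rfl
  have hsm : sm = (raise ℂ)ᵀ := by
    ext i j
    fin_cases i <;> fin_cases j <;> rfl
  rw [Sig, sigmaPlus, hsp, hsm]

end TwoSiteChain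

open TwoSiteChain in
theorem SigmaZ_LambdaZ_commute : SigZ * LamZ = LamZ * SigZ := by
  have h := commute_sigmaZ_lambdaZ_sigmaPlus ℂ
  rw [← sig_eq_sigmaPlus] at h
  exact h.eq
end
end
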